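/- arXiv:math/0011026 — 2 statements merged into one kernel-verified Lean document; each statement's English description precedes it below -/
import Mathlib

section
/- For each fixed s ∈ ℝ, φ_a(s) → +∞ as a → 0: for every R > 0 there exists a_R > 0 such that for all a with |a| ≤ a_R, the solution of -(p u')' + q u = a m u with u(s) = 0, u'(s) = 1/p(s) has no zero in (s, s+R], i.e. φ_a(s) ≥ s + R. -/
open Set

/-!
Compare `u` with `v x = cos ((x - s) / R)`, which solves `(p₁ v')' = -(p₁ / R²) v` and stays
positive on `[s, s + R]`. Once `|a|` is so small that `a m < p₁ / R²` there, Picone's identity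
makes `u (p u') - u² (p₁ v') / v` nondecreasing, with derivative at least
`(q - a m + p₁ / R²) u²`. A second zero `t ∈ (s, s + R]` would make this function vanish at both
ends of `[s, t]`, forcing `u = 0` on `(s, t)` and hence `u' s = 0`, contradicting `u' s = 1 / p s`.
-/

def SolvesSturmLiouvilleOn (p r u u' : ℝ → ℝ) (S : Set ℝ) : Prop :=
  ∀ x ∈ S, HasDerivAt u (u' x) x ∧ HasDerivAt (fun τ => p τ * u' τ) (r x * u x) x

noncomputable def picone (p P u u' v v' : ℝ → ℝ) (x : ℝ) : ℝ :=
  u x * (p x * u' x) - u x ^ 2 * (P x * v' x) / v x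

theorem hasDerivAt_picone {p P r ρ u u' v v' : ℝ → ℝ} {x : ℝ}
    (hu : HasDerivAt u (u' x) x) (hpu : HasDerivAt (fun τ => p τ * u' τ) (r x * u x) x)
    (hv : HasDerivAt v (v' x) x) (hPv : HasDerivAt (fun τ => P τ * v' τ) (ρ x * v x) x)
    (hvx : v x ≠ 0) :
    HasDerivAt (picone p P u u' v v')
      ((r x - ρ x) * u x ^ 2 + (p x - P x) * u' x ^ 2 + P x * (u' x - u x * v' x / v x) ^ 2) x := by
  refine ((hu.fun_mul hpu).fun_sub (((hu.fun_pow 2).fun_mul hPv).fun_div hv hvx)).congr_deriv ?_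
  field_simp
  ring

theorem SolvesSturmLiouvilleOn.eqOn_zero_of_comparison {p P r ρ u u' v v' : ℝ → ℝ} {s t : ℝ}
    (hu : SolvesSturmLiouvilleOn p r u u' (Icc s t))
    (hv : SolvesSturmLiouvilleOn P ρ v v' (Icc s t)) (hv0 : ∀ x ∈ Icc s t, v x ≠ 0)
    (hPp : ∀ x ∈ Ioo s t, P x ≤ p x) (hP : ∀ x ∈ Ioo s t, 0 ≤ P x)
    (hρr : ∀ x ∈ Ioo s t, ρ x < r x) (hus : u s = 0) (hut : u t = 0) :
    EqOn u 0 (Ioo s t) := by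
  set F := picone p P u u' v v'
  set F' := fun x =>
    (r x - ρ x) * u x ^ 2 + (p x - P x) * u' x ^ 2 + P x * (u' x - u x * v' x / v x) ^ 2
  have hF : ∀ x ∈ Icc s t, HasDerivAt F (F' x) x := fun x hx =>
    hasDerivAt_picone (hu x hx).1 (hu x hx).2 (hv x hx).1 (hv x hx).2 (hv0 x hx)
  have hcoef : ∀ x ∈ Ioo s t, 0 ≤ (r x - ρ x) * u x ^ 2 := fun x hx =>
    mul_nonneg (sub_nonneg.2 (hρr x hx).le) (sq_nonneg _)
  have hF'_ge : ∀ x ∈ Ioo s t, (r x - ρ x) * u x ^ 2 ≤ F' x := fun x hx => by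
    have := mul_nonneg (sub_nonneg.2 (hPp x hx)) (sq_nonneg (u' x))
    have := mul_nonneg (hP x hx) (sq_nonneg (u' x - u x * v' x / v x))
    simp only [F']
    linarith
  have hmono : MonotoneOn F (Icc s t) := by
    refine monotoneOn_of_hasDerivWithinAt_nonneg (f' := F') (convex_Icc s t)
      (fun x hx => (hF x hx).continuousAt.continuousWithinAt) (fun x hx => ?_) (fun x hx => ?_)
    all_goals rw [interior_Icc] at hx
    · exact (hF x (Ioo_subset_Icc_self hx)).hasDerivWithinAt
    · exact (hcoef x hx).trans (hF'_ge x hx)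
  have hFs : F s = 0 := by simp [F, picone, hus]
  have hFt : F t = 0 := by simp [F, picone, hut]
  intro x hx
  have hxI := Ioo_subset_Icc_self hx
  have hlocmin : IsLocalMin F x := by
    filter_upwards [Ioo_mem_nhds hx.1 hx.2] with y hy
    have := hmono ⟨le_rfl, hxI.1.trans hxI.2⟩ (Ioo_subset_Icc_self hy) hy.1.le
    have := hmono hxI ⟨hxI.1.trans hxI.2, le_rfl⟩ hxI.2
    linarith
  have hF'x : F' x = 0 := hlocmin.hasDerivAt_eq_zero (hF x hxI)
  have : (r x - ρ x) * u x ^ 2 = 0 := le_antisymm (hF'x ▸ hF'_ge x hx) (hcoef x hx)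
  simpa [sub_eq_zero, (hρr x hx).ne'] using this

theorem solvesSturmLiouvilleOn_cos (P k c : ℝ) (S : Set ℝ) :
    SolvesSturmLiouvilleOn (fun _ => P) (fun _ => -(P * k ^ 2)) (fun x => Real.cos (k * (x - c)))
      (fun x => -(k * Real.sin (k * (x - c)))) S := by
  intro x _
  have hlin : HasDerivAt (fun x => k * (x - c)) k x := by
    simpa using ((hasDerivAt_id x).sub_const c).const_mul k
  refine ⟨hlin.cos.congr_deriv ?_,
    (hlin.sin.const_mul k |>.fun_neg.const_mul P).congr_deriv ?_⟩ <;> ring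

theorem cos_inv_mul_sub_pos {R s x : ℝ} (hR : 0 < R) (hx : x ∈ Icc s (s + R)) :
    0 < Real.cos (R⁻¹ * (x - s)) := by
  have h0 : 0 ≤ R⁻¹ * (x - s) := mul_nonneg (inv_nonneg.2 hR.le) (sub_nonneg.2 hx.1)
  have h1 : R⁻¹ * (x - s) ≤ 1 := by rw [inv_mul_le_iff₀ hR]; linarith [hx.2]
  exact Real.cos_pos_of_mem_Ioo ⟨by linarith [Real.pi_pos], by linarith [Real.pi_gt_three]⟩

theorem HasDerivAt.eq_zero_of_eqOn_Ioo {f : ℝ → ℝ} {f' a b : ℝ} (hf : HasDerivAt f f' a)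
    (hab : a < b) (hfa : f a = 0) (h : EqOn f 0 (Ioo a b)) : f' = 0 :=
  (uniqueDiffWithinAt_Ioi a).eq_deriv _ hf.hasDerivWithinAt <|
    (hasDerivWithinAt_const a _ 0).congr_of_eventuallyEq
      (Filter.eventuallyEq_of_mem (Ioo_mem_nhdsGT hab) h) hfa

theorem zero_function_tendsto_infty_as_a_to_zero_general
    (p q m : ℝ → ℝ) (u u' : ℝ → ℝ → ℝ) (s p₁ : ℝ)
    (hm : Continuous m)
    (hp₁ : 0 < p₁) (hpl : ∀ t, p₁ ≤ p t)
    (hqnn : ∀ t, 0 ≤ q t)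
    (hsol : ∀ a, u a s = 0 ∧ u' a s = 1 / p s ∧
      ∀ t, HasDerivAt (u a) (u' a t) t ∧
        HasDerivAt (fun τ => p τ * u' a τ) (q t * u a t - a * m t * u a t) t) :
    ∀ R > 0, ∃ aR > 0, ∀ a : ℝ, |a| ≤ aR → ∀ t ∈ Ioc s (s + R), u a t ≠ 0 := by
  intro R hR
  obtain ⟨C, hC⟩ :=
    isCompact_Icc.exists_bound_of_continuousOn (hm.continuousOn (s := Icc s (s + R)))
  refine ⟨p₁ * R⁻¹ ^ 2 / (|C| + 1), by positivity, fun a ha t ht hut => ?_⟩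
  obtain ⟨hus, hu's, hu⟩ := hsol a
  have htR : Icc s t ⊆ Icc s (s + R) := Icc_subset_Icc_right ht.2
  have hdom : ∀ x ∈ Ioo s t, -(p₁ * R⁻¹ ^ 2) < q x - a * m x := fun x hx => by
    have hmx : |m x| ≤ |C| := (hC x (htR (Ioo_subset_Icc_self hx))).trans (le_abs_self C)
    have : a * m x < p₁ * R⁻¹ ^ 2 :=
      calc a * m x ≤ |a| * |m x| := abs_mul a (m x) ▸ le_abs_self _
        _ ≤ p₁ * R⁻¹ ^ 2 / (|C| + 1) * |C| := by gcongr
        _ < p₁ * R⁻¹ ^ 2 / (|C| + 1) * (|C| + 1) := by gcongr; exact lt_add_one _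
        _ = p₁ * R⁻¹ ^ 2 := div_mul_cancel₀ _ (by positivity)
    linarith [hqnn x]
  have hzero := SolvesSturmLiouvilleOn.eqOn_zero_of_comparison
    (fun x _ => ⟨(hu x).1, (hu x).2.congr_deriv (by ring)⟩) (solvesSturmLiouvilleOn_cos p₁ R⁻¹ s _)
    (fun x hx => (cos_inv_mul_sub_pos hR (htR hx)).ne') (fun x _ => hpl x) (fun _ _ => hp₁.le)
    hdom hus hut
  have := (hu s).1.eq_zero_of_eqOn_Ioo ht.1 hus hzero
  rw [hu's] at this
  exact (one_div_pos.2 (hp₁.trans_le (hpl s))).ne' this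

/-- For fixed `s`, `φ_a(s) → +∞` as `a → 0`: for every `R > 0` there
exists `a_R > 0` such that for all `|a| ≤ a_R` the solution of
`-(p u')' + q u = a·m·u` with `u a s = 0`, `(u a)' s = 1/p s` has no zero in
`(s, s+R]`, i.e. `φ_a(s) ≥ s + R`. -/
theorem zero_function_tendsto_infty_as_a_to_zero
    (p q m : ℝ → ℝ) (u u' : ℝ → ℝ → ℝ) (s p₁ m₂ : ℝ)
    (hp : Continuous p) (hq : Continuous q) (hm : Continuous m)
    (hp₁ : 0 < p₁) (hpl : ∀ t, p₁ ≤ p t)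
    (hqnn : ∀ t, 0 ≤ q t) (hmb : ∀ t, m t ≤ m₂)
    (hsol : ∀ a, u a s = 0 ∧ u' a s = 1 / p s ∧
      ∀ t, HasDerivAt (u a) (u' a t) t ∧
        HasDerivAt (fun τ => p τ * u' a τ) (q t * u a t - a * m t * u a t) t) :
    ∀ R > 0, ∃ aR > 0, ∀ a : ℝ, |a| ≤ aR → ∀ t ∈ Ioc s (s + R), u a t ≠ 0 :=
  zero_function_tendsto_infty_as_a_to_zero_general p q m u u' s p₁ hm hp₁ hpl hqnn hsol
end

section
/- If m⁺ ≢ 0 on (T₁, T₂) (i.e. m(t) > 0 somewhere in (T₁, T₂)), then there exists exactly one a > 0 such that φ_a(T₁) = T₂, and this a equals the first positive eigenvalue λ₁^m of the Dirichlet problem -(p u')' + q u = λ m u on (T₁, T₂), u(T₁) = u(T₂) = 0. -/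
/-!
Let `P` be the set of parameters `a` whose solution `u a` stays positive on `(T₁, T₂]`.
By continuous dependence on `a` (Grönwall) `P` is open. It contains `0`, by the energy identity
`∫ (p u'² + q u²) = a ∫ m u²` for solutions vanishing at both ends. It misses every large `a`:
Picone's inequality `b ∫ m φ² ≤ ∫ (p φ'² + q φ²)`, valid when `φ` vanishes at the ends of an
interval on which the solution for `b` has no zero, fails for large `b` once `φ` lives where
`m > 0`. The least `a ≥ 0` outside `P` is therefore positive, and `u a` is a nonnegative limit
of positive solutions; an interior zero would be a double zero, which ODE uniqueness forbids, so
the first zero of `u a` is `T₂`. Two such parameters coincide by Picone's inequality applied to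
the two eigenfunctions, combined with the energy identity.
-/

open Set Filter Topology
open scoped NNReal

theorem pos_of_forall_ne_zero {f : ℝ → ℝ} {a b : ℝ} (hf : ContinuousOn f (Icc a b))
    (hpos : ∀ᶠ t in 𝓝[>] a, 0 < f t) (hne : ∀ t ∈ Ioc a b, f t ≠ 0) :
    ∀ t ∈ Ioc a b, 0 < f t := by
  intro t ht
  by_contra! hft
  obtain ⟨s, hs, hst⟩ := (hpos.and (Ioo_mem_nhdsGT ht.1)).exists
  obtain ⟨r, hr, hr0⟩ := intermediate_value_Icc' hst.2.le (hf.mono (Icc_subset_Icc hst.1.le ht.2))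
    ⟨hft, hs.le⟩
  exact hne r ⟨hst.1.trans_le hr.1, hr.2.trans ht.2⟩ hr0

theorem eventually_pos_of_hasDerivAt {f : ℝ → ℝ} {f' x : ℝ} (hf : HasDerivAt f f' x)
    (hf' : 0 < f') (hx : f x = 0) : ∀ᶠ t in 𝓝[>] x, 0 < f t := by
  filter_upwards [((hasDerivAt_iff_tendsto_slope.1 hf).mono_left (nhdsGT_le_nhdsNE x)).eventually
    (eventually_gt_nhds hf'), self_mem_nhdsWithin] with t hslope hxt
  exact pos_of_slope_pos hxt hslope hx

theorem tendsto_div_of_hasDerivAt {f g : ℝ → ℝ} {f' g' c : ℝ} (hf : HasDerivAt f f' c)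
    (hg : HasDerivAt g g' c) (hfc : f c = 0) (hgc : g c = 0) (hg' : g' ≠ 0) :
    Tendsto (fun t => f t / g t) (𝓝[≠] c) (𝓝 (f' / g')) := by
  refine ((hasDerivAt_iff_tendsto_slope.1 hf).div (hasDerivAt_iff_tendsto_slope.1 hg) hg').congr'
    (eventually_nhdsWithin_of_forall fun t ht => ?_)
  have : t - c ≠ 0 := sub_ne_zero.2 ht
  rw [Pi.div_apply, slope_def_field, slope_def_field, hfc, hgc, sub_zero, sub_zero,
    div_div_div_cancel_right₀ this]

theorem MonotoneOn.le_of_tendsto_Ioo {f : ℝ → ℝ} {a b x y : ℝ} (hab : a < b)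
    (hf : MonotoneOn f (Ioo a b)) (ha : Tendsto f (𝓝[>] a) (𝓝 x))
    (hb : Tendsto f (𝓝[<] b) (𝓝 y)) : x ≤ y := by
  obtain ⟨c, hac, hcb⟩ := exists_between hab
  have hc : c ∈ Ioo a b := ⟨hac, hcb⟩
  calc x ≤ f c := le_of_tendsto ha <| by
        filter_upwards [Ioo_mem_nhdsGT hac] with s hs using hf ⟨hs.1, hs.2.trans hcb⟩ hc hs.2.le
    _ ≤ y := ge_of_tendsto hb <| by
        filter_upwards [Ioo_mem_nhdsLT hcb] with s hs using hf hc ⟨hac.trans hs.1, hs.2⟩ hs.1.le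

theorem sInf_setOf_zero_eq_iff {f : ℝ → ℝ} (hf : Continuous f) {a b : ℝ} (hab : a < b) :
    ({t | a < t ∧ f t = 0}.Nonempty ∧ sInf {t | a < t ∧ f t = 0} = b) ↔
      (f b = 0 ∧ ∀ t ∈ Ioo a b, f t ≠ 0) := by
  have hbdd : BddBelow {t | a < t ∧ f t = 0} := ⟨a, fun t ht => ht.1.le⟩
  constructor
  · rintro ⟨hne, hinf⟩
    refine ⟨?_, fun t ht h0 => ht.2.not_ge (hinf ▸ csInf_le hbdd ⟨ht.1, h0⟩)⟩
    have := closure_minimal (fun t ht => ht.2) (isClosed_eq hf continuous_const)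
      (csInf_mem_closure hne hbdd)
    rwa [hinf] at this
  · rintro ⟨hb, hno⟩
    refine ⟨⟨b, hab, hb⟩, le_antisymm (csInf_le hbdd ⟨hab, hb⟩) (le_csInf ⟨b, hab, hb⟩ ?_)⟩
    exact fun t ht => not_lt.1 fun htb => hno t ⟨ht.1, htb⟩ ht.2

theorem tendstoUniformlyOn_of_hasDerivAt_ODE {α E : Type*} [NormedAddCommGroup E]
    [NormedSpace ℝ E] {v : α → ℝ → E → E} {X : α → ℝ → E} {l : Filter α} {a₀ : α} {t₀ t₁ : ℝ}
    {K : ℝ≥0} (hX : ∀ a, ∀ t ∈ Icc t₀ t₁, HasDerivAt (X a) (v a t (X a t)) t)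
    (hX₀ : ∀ a, X a t₀ = X a₀ t₀) (hK : ∀ᶠ a in l, ∀ t ∈ Icc t₀ t₁, LipschitzWith K (v a t))
    (hv : TendstoUniformlyOn (fun a t => v a t (X a₀ t)) (fun t => v a₀ t (X a₀ t)) l
      (Icc t₀ t₁)) :
    TendstoUniformlyOn X (X a₀) l (Icc t₀ t₁) := by
  rw [Metric.tendstoUniformlyOn_iff] at hv ⊢
  intro ε hε
  have hgron : Tendsto (fun δ => gronwallBound 0 K δ (t₁ - t₀)) (𝓝[>] 0) (𝓝 0) := by
    simpa [gronwallBound_ε0_δ0] using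
      ((gronwallBound_continuous_ε 0 K (t₁ - t₀)).tendsto 0).mono_left nhdsWithin_le_nhds
  obtain ⟨δ, hδε, hδ⟩ := ((hgron.eventually (eventually_lt_nhds hε)).and
    self_mem_nhdsWithin).exists
  filter_upwards [hK, hv δ hδ] with a hKa hva t ht
  have hcont : ∀ b, ContinuousOn (X b) (Icc t₀ t₁) := fun b =>
    HasDerivAt.continuousOn fun t ht => hX b t ht
  have hderiv : ∀ b, ∀ t ∈ Ico t₀ t₁, HasDerivWithinAt (X b) (v b t (X b t)) (Ici t) t :=
    fun b t ht => (hX b t (Ico_subset_Icc_self ht)).hasDerivWithinAt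
  have hdist := dist_le_of_approx_trajectories_ODE_of_mem (s := fun _ => univ)
    (fun t ht => (hKa t (Ico_subset_Icc_self ht)).lipschitzOnWith) (hcont a₀) (hderiv a₀)
    (fun t ht => (hva t (Ico_subset_Icc_self ht)).le) (fun _ _ => trivial) (hcont a) (hderiv a)
    (fun t _ => (dist_self _).le) (fun _ _ => trivial) (dist_le_zero.2 (hX₀ a).symm) t ht
  calc dist (X a₀ t) (X a t) ≤ gronwallBound 0 K (δ + 0) (t - t₀) := hdist
    _ ≤ gronwallBound 0 K δ (t₁ - t₀) := by
        rw [add_zero]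
        exact gronwallBound_mono le_rfl (le_of_lt hδ) K.2 (by linarith [ht.2])
    _ < ε := hδε

theorem pos_of_hasDerivAt_of_pos {f f' : ℝ → ℝ} {α β : ℝ} (hf : ∀ t, HasDerivAt f (f' t) t)
    (hα : f α = 0) (hf' : ∀ t ∈ Ioo α β, 0 < f' t) : ∀ t ∈ Ioc α β, 0 < f t := by
  have hmono : StrictMonoOn f (Icc α β) :=
    strictMonoOn_of_deriv_pos (convex_Icc α β)
      (HasDerivAt.continuousOn fun t _ => hf t) fun t ht => by
        rw [interior_Icc] at ht
        rw [(hf t).deriv]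
        exact hf' t ht
  intro t ht
  simpa [hα] using hmono (left_mem_Icc.2 (ht.1.le.trans ht.2)) (Ioc_subset_Icc_self ht) ht.1

/-- `f` solves `-(p f')' + q f = a m f`, where `f'` is the derivative of `f`; only the flux
`p f'`, not `f'` itself, has to be differentiable. -/
structure SturmLiouvilleSol (p q m : ℝ → ℝ) (a : ℝ) (f f' : ℝ → ℝ) : Prop where
  hasDerivAt : ∀ t, HasDerivAt f (f' t) t
  hasDerivAt_flux : ∀ t, HasDerivAt (fun τ => p τ * f' τ) (q t * f t - a * m t * f t) t

/-- The equation as a first-order system for the phase `(f, p f')`. -/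
noncomputable def slField (p q m : ℝ → ℝ) (a t : ℝ) (x : ℝ × ℝ) : ℝ × ℝ :=
  ((p t)⁻¹ * x.2, (q t - a * m t) * x.1)

theorem exists_lipschitzWith_slField {p q m : ℝ → ℝ} (hp : Continuous p) (hq : Continuous q)
    (hm : Continuous m) (hp0 : ∀ t, p t ≠ 0) {s : Set (ℝ × ℝ)} (hs : IsCompact s) :
    ∃ K, ∀ x ∈ s, LipschitzWith K (slField p q m x.1 x.2) := by
  obtain ⟨C, hC⟩ := hs.exists_bound_of_continuousOn (f := fun x : ℝ × ℝ =>
    max ‖(p x.2)⁻¹‖ ‖q x.2 - x.1 * m x.2‖) <| Continuous.continuousOn <|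
      ((hp.inv₀ hp0).comp continuous_snd).norm.max
        ((hq.comp continuous_snd).sub (continuous_fst.mul (hm.comp continuous_snd))).norm
  refine ⟨C.toNNReal, fun x hx => ?_⟩
  have hLip := ((lipschitzWith_smul (p x.2)⁻¹).comp (LipschitzWith.prod_snd (α := ℝ))).prodMk
    ((lipschitzWith_smul (q x.2 - x.1 * m x.2)).comp (LipschitzWith.prod_fst (β := ℝ)))
  refine hLip.weaken ?_
  rw [mul_one, mul_one, ← NNReal.coe_le_coe, NNReal.coe_max, coe_nnnorm, coe_nnnorm]
  exact ((le_abs_self _).trans (hC x hx)).trans (Real.le_coe_toNNReal C)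

namespace SturmLiouvilleSol

variable {p q m : ℝ → ℝ} {a b : ℝ} {f f' g g' : ℝ → ℝ}

theorem continuous (hf : SturmLiouvilleSol p q m a f f') : Continuous f :=
  continuous_iff_continuousAt.2 fun t => (hf.hasDerivAt t).continuousAt

theorem continuous_flux (hf : SturmLiouvilleSol p q m a f f') :
    Continuous fun t => p t * f' t :=
  continuous_iff_continuousAt.2 fun t => (hf.hasDerivAt_flux t).continuousAt

theorem continuous_deriv (hf : SturmLiouvilleSol p q m a f f') (hp : Continuous p)
    (hp0 : ∀ t, p t ≠ 0) : Continuous f' :=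
  (hf.continuous_flux.div hp hp0).congr fun t => mul_div_cancel_left₀ _ (hp0 t)

theorem hasDerivAt_phase (hf : SturmLiouvilleSol p q m a f f') (hp0 : ∀ t, p t ≠ 0) (t : ℝ) :
    HasDerivAt (fun t => (f t, p t * f' t)) (slField p q m a t (f t, p t * f' t)) t := by
  convert (hf.hasDerivAt t).prodMk (hf.hasDerivAt_flux t) using 1
  simp only [slField, inv_mul_cancel_left₀ (hp0 t), Prod.mk.injEq, true_and]
  ring

theorem phase_eq_zero (hf : SturmLiouvilleSol p q m a f f') (hp : Continuous p)
    (hq : Continuous q) (hm : Continuous m) (hp0 : ∀ t, p t ≠ 0) {z : ℝ} (hz : f z = 0)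
    (hz' : f' z = 0) (x : ℝ) : f x = 0 ∧ p x * f' x = 0 := by
  obtain ⟨K, hK⟩ := exists_lipschitzWith_slField hp hq hm hp0 (isCompact_singleton.prod
    (isCompact_Icc (a := min x z - 1) (b := max x z + 1)))
  have hzI : z ∈ Ioo (min x z - 1) (max x z + 1) :=
    ⟨by linarith [min_le_right x z], by linarith [le_max_right x z]⟩
  have heq := ODE_solution_unique_of_mem_Icc (s := fun _ => univ) (g := fun _ => 0)
    (fun t ht => (hK (a, t) ⟨rfl, Ioo_subset_Icc_self ht⟩).lipschitzOnWith) hzI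
    (HasDerivAt.continuousOn fun t _ => hf.hasDerivAt_phase hp0 t)
    (fun t _ => hf.hasDerivAt_phase hp0 t) (fun _ _ => trivial) continuousOn_const
    (fun t _ => by simpa [slField, Prod.mk_zero_zero] using hasDerivAt_const t (0 : ℝ × ℝ))
    (fun _ _ => trivial) (by simp [hz, hz', Prod.mk_zero_zero])
  simpa using heq ⟨by linarith [min_le_left x z], by linarith [le_max_left x z]⟩

theorem deriv_ne_zero (hf : SturmLiouvilleSol p q m a f f') (hp : Continuous p)
    (hq : Continuous q) (hm : Continuous m) (hp0 : ∀ t, p t ≠ 0) {x : ℝ} (hx : p x * f' x ≠ 0)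
    {z : ℝ} (hz : f z = 0) : f' z ≠ 0 :=
  fun h => hx (hf.phase_eq_zero hp hq hm hp0 hz h x).2

theorem ne_zero_of_nonneg (hf : SturmLiouvilleSol p q m a f f') (hp : Continuous p)
    (hq : Continuous q) (hm : Continuous m) (hp0 : ∀ t, p t ≠ 0) {x : ℝ} (hx : p x * f' x ≠ 0)
    {α β : ℝ} (hnonneg : ∀ t ∈ Ioo α β, 0 ≤ f t) : ∀ t ∈ Ioo α β, f t ≠ 0 := by
  intro t ht h0
  have hmin : IsLocalMin f t := Filter.mem_of_superset (Ioo_mem_nhds ht.1 ht.2)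
    fun s hs => h0 ▸ hnonneg s hs
  exact hf.deriv_ne_zero hp hq hm hp0 hx h0 (hmin.hasDerivAt_eq_zero (hf.hasDerivAt t))

theorem integral_energy_eq (hf : SturmLiouvilleSol p q m a f f') (hp : Continuous p)
    (hq : Continuous q) (hm : Continuous m) (hp0 : ∀ t, p t ≠ 0) (α β : ℝ) :
    (∫ t in α..β, (p t * f' t ^ 2 + q t * f t ^ 2)) - a * ∫ t in α..β, m t * f t ^ 2 =
      f β * (p β * f' β) - f α * (p α * f' α) := by
  have hf' := hf.continuous_deriv hp hp0
  have hcont := hf.continuous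
  have hftc : ∫ t in α..β, (p t * f' t ^ 2 + q t * f t ^ 2 - a * (m t * f t ^ 2)) =
      f β * (p β * f' β) - f α * (p α * f' α) :=
    intervalIntegral.integral_eq_sub_of_hasDerivAt
      (fun t _ => ((hf.hasDerivAt t).mul (hf.hasDerivAt_flux t)).congr_deriv (by ring))
      ((by fun_prop : Continuous _).intervalIntegrable _ _)
  rwa [intervalIntegral.integral_sub ((by fun_prop : Continuous _).intervalIntegrable _ _)
    ((by fun_prop : Continuous _).intervalIntegrable _ _), intervalIntegral.integral_const_mul]
    at hftc

theorem integral_energy_pos (hf : SturmLiouvilleSol p q m a f f') (hp : Continuous p)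
    (hq : Continuous q) (hpos : ∀ t, 0 < p t) (hqnn : ∀ t, 0 ≤ q t) {α β : ℝ} (hαβ : α < β)
    (hα : f' α ≠ 0) : 0 < ∫ t in α..β, (p t * f' t ^ 2 + q t * f t ^ 2) := by
  have hf' := hf.continuous_deriv hp fun t => (hpos t).ne'
  have hcont := hf.continuous
  refine intervalIntegral.integral_pos hαβ (by fun_prop : Continuous _).continuousOn
    (fun t _ => by have := hpos t; have := hqnn t; positivity) ⟨α, left_mem_Icc.2 hαβ.le, ?_⟩
  have := hpos α
  have := hqnn α
  positivity

theorem pos_of_param_zero (hf : SturmLiouvilleSol p q m 0 f f') (hp : Continuous p)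
    (hq : Continuous q) (hm : Continuous m) (hpos : ∀ t, 0 < p t) (hqnn : ∀ t, 0 ≤ q t)
    {T : ℝ} (hfT : f T = 0) (hf'T : 0 < f' T) {t : ℝ} (ht : T < t) : 0 < f t := by
  refine pos_of_forall_ne_zero hf.continuous.continuousOn
    (eventually_pos_of_hasDerivAt (hf.hasDerivAt T) hf'T hfT) (fun z hz h0 => ?_) t ⟨ht, le_rfl⟩
  have henergy := hf.integral_energy_eq hp hq hm (fun t => (hpos t).ne') T z
  rw [h0, hfT, zero_mul, zero_mul, sub_zero, zero_mul, sub_zero] at henergy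
  exact (hf.integral_energy_pos hp hq hpos hqnn hz.1 hf'T.ne').ne' henergy

theorem picone_inequality (hg : SturmLiouvilleSol p q m b g g')
    (hp : Continuous p) (hq : Continuous q) (hm : Continuous m) (hpos : ∀ t, 0 < p t)
    {α β : ℝ} (hαβ : α < β) (hgne : ∀ t ∈ Ioo α β, g t ≠ 0) {φ φ' : ℝ → ℝ}
    (hφ : ∀ t, HasDerivAt φ (φ' t) t) (hφ' : Continuous φ')
    (hα : Tendsto (fun t => φ t ^ 2 * (p t * g' t) / g t) (𝓝[>] α) (𝓝 0))
    (hβ : Tendsto (fun t => φ t ^ 2 * (p t * g' t) / g t) (𝓝[<] β) (𝓝 0)) :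
    b * ∫ t in α..β, m t * φ t ^ 2 ≤ ∫ t in α..β, (p t * φ' t ^ 2 + q t * φ t ^ 2) := by
  have hφc : Continuous φ := continuous_iff_continuousAt.2 fun t => (hφ t).continuousAt
  set Q := fun t => p t * φ' t ^ 2 + q t * φ t ^ 2 - b * (m t * φ t ^ 2) with hQ_def
  have hQ : Continuous Q := by fun_prop
  set H := fun t => (∫ s in α..t, Q s) - φ t ^ 2 * (p t * g' t) / g t
  have hH' : ∀ t ∈ Ioo α β, HasDerivAt H (p t * (φ' t - φ t * g' t / g t) ^ 2) t := by
    intro t ht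
    have hgt := hgne t ht
    refine ((hQ.integral_hasStrictDerivAt α t).hasDerivAt.sub
      ((((hφ t).pow 2).mul (hg.hasDerivAt_flux t)).div (hg.hasDerivAt t) hgt)).congr_deriv ?_
    simp only [hQ_def, Pi.pow_apply, Pi.mul_apply]
    field_simp
    ring
  have hmono : MonotoneOn H (Ioo α β) := by
    refine monotoneOn_of_hasDerivWithinAt_nonneg (convex_Ioo α β)
      (f' := fun t => p t * (φ' t - φ t * g' t / g t) ^ 2)
      (fun t ht => (hH' t ht).continuousAt.continuousWithinAt) (fun t ht => ?_) (fun t _ => ?_)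
    · rw [interior_Ioo] at ht
      exact (hH' t ht).hasDerivWithinAt
    · exact mul_nonneg (hpos t).le (sq_nonneg _)
  have hprim : Continuous fun t => ∫ s in α..t, Q s :=
    intervalIntegral.continuous_primitive (fun _ _ => hQ.intervalIntegrable _ _) α
  have hlim := hmono.le_of_tendsto_Ioo hαβ
    (((hprim.tendsto' α 0 (by simp)).mono_left nhdsWithin_le_nhds).sub hα)
    (((hprim.tendsto β).mono_left nhdsWithin_le_nhds).sub hβ)
  rw [sub_zero, sub_zero,
    intervalIntegral.integral_sub ((by fun_prop : Continuous _).intervalIntegrable _ _)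
      ((by fun_prop : Continuous _).intervalIntegrable _ _),
    intervalIntegral.integral_const_mul] at hlim
  linarith

theorem tendsto_picone_term_of_ne_zero (hg : SturmLiouvilleSol p q m b g g') {φ : ℝ → ℝ}
    (hφ : Continuous φ) {c : ℝ} (hφc : φ c = 0) (hgc : g c ≠ 0) :
    Tendsto (fun t => φ t ^ 2 * (p t * g' t) / g t) (𝓝 c) (𝓝 0) := by
  have h : Tendsto (fun t => φ t ^ 2 * (p t * g' t) / g t) (𝓝 c)
      (𝓝 (φ c ^ 2 * (p c * g' c) / g c)) :=
    (((hφ.pow 2).mul hg.continuous_flux).tendsto c).div (hg.continuous.tendsto c) hgc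
  rwa [hφc, sq, zero_mul, zero_mul, zero_div] at h

theorem tendsto_picone_term_of_eq_zero (hg : SturmLiouvilleSol p q m b g g') {φ : ℝ → ℝ}
    {c φ'c : ℝ} (hφ : HasDerivAt φ φ'c c) (hφc : φ c = 0) (hgc : g c = 0) (hg'c : g' c ≠ 0) :
    Tendsto (fun t => φ t ^ 2 * (p t * g' t) / g t) (𝓝[≠] c) (𝓝 0) := by
  have hφt : Tendsto φ (𝓝[≠] c) (𝓝 0) := hφc ▸ hφ.continuousAt.tendsto.mono_left nhdsWithin_le_nhds
  have := (hφt.mul (tendsto_div_of_hasDerivAt hφ (hg.hasDerivAt c) hφc hgc hg'c)).mul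
    ((hg.continuous_flux.continuousAt (x := c)).tendsto.mono_left nhdsWithin_le_nhds)
  rw [zero_mul, zero_mul] at this
  refine this.congr fun t => ?_
  ring

theorem param_le_of_ne_zero (hf : SturmLiouvilleSol p q m a f f')
    (hg : SturmLiouvilleSol p q m b g g') (hp : Continuous p) (hq : Continuous q)
    (hm : Continuous m) (hpos : ∀ t, 0 < p t) (hqnn : ∀ t, 0 ≤ q t) {T₁ T₂ : ℝ} (hT : T₁ < T₂)
    (ha : 0 < a) (hf₁ : f T₁ = 0) (hf'₁ : f' T₁ ≠ 0) (hf₂ : f T₂ = 0) (hg₁ : g T₁ = 0)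
    (hg'₁ : g' T₁ ≠ 0) (hg₂ : g T₂ = 0) (hg'₂ : g' T₂ ≠ 0)
    (hgne : ∀ t ∈ Ioo T₁ T₂, g t ≠ 0) : b ≤ a := by
  have hp0 : ∀ t, p t ≠ 0 := fun t => (hpos t).ne'
  have henergy := hf.integral_energy_eq hp hq hm hp0 T₁ T₂
  rw [hf₁, hf₂, zero_mul, zero_mul, sub_zero] at henergy
  have hD := hf.integral_energy_pos hp hq hpos hqnn hT hf'₁
  have hpicone := hg.picone_inequality hp hq hm hpos hT hgne hf.hasDerivAt
    (hf.continuous_deriv hp hp0)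
    ((hg.tendsto_picone_term_of_eq_zero (hf.hasDerivAt T₁) hf₁ hg₁ hg'₁).mono_left
      (nhdsGT_le_nhdsNE T₁))
    ((hg.tendsto_picone_term_of_eq_zero (hf.hasDerivAt T₂) hf₂ hg₂ hg'₂).mono_left
      (nhdsLT_le_nhdsNE T₂))
  have hW : 0 < ∫ t in T₁..T₂, m t * f t ^ 2 := by
    by_contra! h
    nlinarith
  exact le_of_mul_le_mul_right (by linarith) hW

theorem exists_zero_of_lt (hg : SturmLiouvilleSol p q m b g g') (hp : Continuous p)
    (hq : Continuous q) (hm : Continuous m) (hpos : ∀ t, 0 < p t) {α β : ℝ} (hαβ : α < β)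
    {φ φ' : ℝ → ℝ} (hφ : ∀ t, HasDerivAt φ (φ' t) t) (hφ' : Continuous φ') (hφα : φ α = 0)
    (hφβ : φ β = 0)
    (hlt : ∫ t in α..β, (p t * φ' t ^ 2 + q t * φ t ^ 2) < b * ∫ t in α..β, m t * φ t ^ 2) :
    ∃ t ∈ Icc α β, g t = 0 := by
  by_contra! hne
  have hφc : Continuous φ := continuous_iff_continuousAt.2 fun t => (hφ t).continuousAt
  exact hlt.not_ge <| hg.picone_inequality hp hq hm hpos hαβ
    (fun t ht => hne t (Ioo_subset_Icc_self ht)) hφ hφ'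
    ((hg.tendsto_picone_term_of_ne_zero hφc hφα (hne α (left_mem_Icc.2 hαβ.le))).mono_left
      nhdsWithin_le_nhds)
    ((hg.tendsto_picone_term_of_ne_zero hφc hφβ (hne β (right_mem_Icc.2 hαβ.le))).mono_left
      nhdsWithin_le_nhds)

end SturmLiouvilleSol

theorem eventually_sturmLiouvilleSol_exists_zero {p q m : ℝ → ℝ} (hp : Continuous p)
    (hq : Continuous q) (hm : Continuous m) (hpos : ∀ t, 0 < p t) {T₁ T₂ : ℝ}
    (hmplus : ∃ t ∈ Ioo T₁ T₂, 0 < m t) :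
    ∀ᶠ b in atTop, ∀ g g', SturmLiouvilleSol p q m b g g' → ∃ t ∈ Ioo T₁ T₂, g t = 0 := by
  obtain ⟨t₀, ht₀, hmt₀⟩ := hmplus
  obtain ⟨α, β, -, hnhds, hsub⟩ := exists_Icc_mem_subset_of_mem_nhds
    (inter_mem (Ioo_mem_nhds ht₀.1 ht₀.2) ((hm.tendsto t₀).eventually (lt_mem_nhds hmt₀)))
  have ht₀αβ : t₀ ∈ Ioo α β := by simpa using mem_interior_iff_mem_nhds.2 hnhds
  have hαβ : α < β := ht₀αβ.1.trans ht₀αβ.2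
  set φ : ℝ → ℝ := fun t => (t - α) * (β - t)
  have hφ : ∀ t, HasDerivAt φ (β - t - (t - α)) t := fun t =>
    (((hasDerivAt_id t).sub_const α).mul ((hasDerivAt_id t).const_sub β)).congr_deriv
      (by simp; ring)
  have hW : 0 < ∫ t in α..β, m t * φ t ^ 2 := by
    refine intervalIntegral.integral_pos hαβ (by fun_prop : Continuous _).continuousOn
      (fun t ht => mul_nonneg (hsub (Ioc_subset_Icc_self ht)).2.le (sq_nonneg _))
      ⟨t₀, Ioo_subset_Icc_self ht₀αβ, mul_pos hmt₀ (pow_pos (mul_pos ?_ ?_) 2)⟩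
    · exact sub_pos.2 ht₀αβ.1
    · exact sub_pos.2 ht₀αβ.2
  filter_upwards [eventually_gt_atTop
    ((∫ t in α..β, (p t * (β - t - (t - α)) ^ 2 + q t * φ t ^ 2)) / ∫ t in α..β, m t * φ t ^ 2)]
    with b hb g g' hg
  obtain ⟨t, ht, hgt⟩ := hg.exists_zero_of_lt hp hq hm hpos hαβ hφ (by fun_prop) (by simp [φ])
    (by simp [φ]) ((div_lt_iff₀ hW).1 hb)
  exact ⟨t, (hsub ht).1, hgt⟩

section Family

variable {p q m : ℝ → ℝ} {u u' : ℝ → ℝ → ℝ}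

theorem tendstoUniformlyOn_phase (hp : Continuous p) (hq : Continuous q) (hm : Continuous m)
    (hp0 : ∀ t, p t ≠ 0) (hu : ∀ a, SturmLiouvilleSol p q m a (u a) (u' a)) {T : ℝ}
    (hinit : ∀ a, u a T = 0 ∧ p T * u' a T = 1) (B a₀ : ℝ) :
    TendstoUniformlyOn (fun a t => (u a t, p t * u' a t)) (fun t => (u a₀ t, p t * u' a₀ t))
      (𝓝 a₀) (Icc T B) := by
  obtain ⟨K, hK⟩ := exists_lipschitzWith_slField hp hq hm hp0
    ((isCompact_Icc (a := a₀ - 1) (b := a₀ + 1)).prod (isCompact_Icc (a := T) (b := B)))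
  refine tendstoUniformlyOn_of_hasDerivAt_ODE (v := slField p q m) (K := K)
    (fun a t _ => (hu a).hasDerivAt_phase hp0 t)
    (fun a => by rw [(hinit a).1, (hinit a).2, (hinit a₀).1, (hinit a₀).2]) ?_ ?_
  · filter_upwards [Icc_mem_nhds (sub_one_lt a₀) (lt_add_one a₀)] with a ha t ht
      using hK (a, t) ⟨ha, ht⟩
  · have hu₀ := (hu a₀).continuous
    have hu'₀ := (hu a₀).continuous_deriv hp hp0
    rw [tendstoUniformlyOn_iff_tendstoUniformly_comp_coe]
    exact Continuous.tendstoUniformly _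
      (by simp only [slField, inv_mul_cancel_left₀ (hp0 _)]; fun_prop) a₀

theorem isOpen_setOf_forall_pos (hp : Continuous p) (hq : Continuous q) (hm : Continuous m)
    (hpos : ∀ t, 0 < p t) (hu : ∀ a, SturmLiouvilleSol p q m a (u a) (u' a)) {T₁ T₂ : ℝ}
    (hinit : ∀ a, u a T₁ = 0 ∧ p T₁ * u' a T₁ = 1) :
    IsOpen {a | ∀ t ∈ Ioc T₁ T₂, 0 < u a t} := by
  rcases le_or_gt T₂ T₁ with hT | hT
  · simp [Ioc_eq_empty hT.not_gt]
  rw [isOpen_iff_eventually]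
  intro a₀ ha₀
  -- near `T₁` the flux stays above `1/2`, further right `u a₀` stays above some `c > 0`
  obtain ⟨s, hs, hflux⟩ := mem_nhdsGE_iff_exists_Icc_subset.1 <|
    (((hu a₀).continuous_flux.tendsto T₁).mono_left nhdsWithin_le_nhds).eventually
      (lt_mem_nhds (by rw [(hinit a₀).2]; norm_num : (1 / 2 : ℝ) < p T₁ * u' a₀ T₁))
  obtain ⟨t₀, ht₀, hmin⟩ := isCompact_Icc.exists_isMinOn
    (nonempty_Icc.2 (min_le_right s T₂)) (hu a₀).continuous.continuousOn
  have hc : 0 < u a₀ t₀ := ha₀ t₀ ⟨(lt_min hs hT).trans_le ht₀.1, ht₀.2⟩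
  filter_upwards [Metric.tendstoUniformlyOn_iff.1 (tendstoUniformlyOn_phase hp hq hm
    (fun t => (hpos t).ne') hu hinit T₂ a₀) (min (1 / 2) (u a₀ t₀)) (by positivity)]
    with a ha t ht
  have hclose : ∀ x ∈ Icc T₁ T₂, |u a₀ x - u a x| < min (1 / 2) (u a₀ t₀) ∧
      |p x * u' a₀ x - p x * u' a x| < min (1 / 2) (u a₀ t₀) := fun x hx => by
    have h := ha x hx
    rw [Prod.dist_eq, Real.dist_eq, Real.dist_eq] at h
    exact ⟨(le_max_left _ _).trans_lt h, (le_max_right _ _).trans_lt h⟩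
  rcases le_or_gt t (min s T₂) with hts | hts
  · refine pos_of_hasDerivAt_of_pos (hu a).hasDerivAt (hinit a).1 (fun x hx => ?_) t ⟨ht.1, hts⟩
    have hx' : x ∈ Icc T₁ T₂ := ⟨hx.1.le, hx.2.le.trans (min_le_right _ _)⟩
    have h1 : 1 / 2 < p x * u' a₀ x := hflux ⟨hx.1.le, hx.2.le.trans (min_le_left _ _)⟩
    have h2 := (abs_lt.1 (hclose x hx').2).2.trans_le (min_le_left _ _)
    exact pos_of_mul_pos_right (by linarith) (hpos x).le
  · have h1 : u a₀ t₀ ≤ u a₀ t := hmin ⟨hts.le, ht.2⟩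
    have h2 := (abs_lt.1 (hclose t (Ioc_subset_Icc_self ht)).1).2.trans_le (min_le_right _ _)
    linarith

theorem continuous_apply_of_le (hp : Continuous p) (hq : Continuous q) (hm : Continuous m)
    (hp0 : ∀ t, p t ≠ 0) (hu : ∀ a, SturmLiouvilleSol p q m a (u a) (u' a)) {T t : ℝ}
    (hinit : ∀ a, u a T = 0 ∧ p T * u' a T = 1) (ht : T ≤ t) : Continuous fun a => u a t :=
  continuous_iff_continuousAt.2 fun a₀ =>
    ((tendstoUniformlyOn_phase hp hq hm hp0 hu hinit t a₀).tendsto_at ⟨ht, le_rfl⟩).fst_nhds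

theorem exists_pos_dirichlet_eigenvalue (hp : Continuous p) (hq : Continuous q)
    (hm : Continuous m) (hpos : ∀ t, 0 < p t) (hqnn : ∀ t, 0 ≤ q t) {T₁ T₂ : ℝ}
    (hmplus : ∃ t ∈ Ioo T₁ T₂, 0 < m t) (hu : ∀ a, SturmLiouvilleSol p q m a (u a) (u' a))
    (hinit : ∀ a, u a T₁ = 0 ∧ p T₁ * u' a T₁ = 1) :
    ∃ a, 0 < a ∧ u a T₂ = 0 ∧ ∀ t ∈ Ioo T₁ T₂, u a t ≠ 0 := by
  have hp0 : ∀ t, p t ≠ 0 := fun t => (hpos t).ne'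
  set P := {a | ∀ t ∈ Ioc T₁ T₂, 0 < u a t}
  have hP0 : (0 : ℝ) ∈ P := fun t ht => (hu 0).pos_of_param_zero hp hq hm hpos hqnn (hinit 0).1
    (pos_of_mul_pos_right ((hinit 0).2 ▸ one_pos) (hpos T₁).le) ht.1
  obtain ⟨A, hA, hAP⟩ : ∃ A, 0 ≤ A ∧ A ∉ P := by
    obtain ⟨A, hzero, hA⟩ := ((eventually_sturmLiouvilleSol_exists_zero hp hq hm hpos hmplus).and
      (eventually_ge_atTop 0)).exists
    obtain ⟨t, ht, h0⟩ := hzero (u A) (u' A) (hu A)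
    exact ⟨A, hA, fun hAP => (hAP t (Ioo_subset_Ioc_self ht)).ne' h0⟩
  -- the least nonnegative parameter whose solution fails to stay positive on `(T₁, T₂]`
  set S := Ici 0 ∩ Pᶜ
  have hbdd : BddBelow S := ⟨0, fun _ h => h.1⟩
  have haS : sInf S ∈ S := (isClosed_Ici.inter (isOpen_setOf_forall_pos hp hq hm hpos hu
    hinit).isClosed_compl).csInf_mem ⟨A, hA, hAP⟩ hbdd
  set a := sInf S
  have ha : 0 < a := haS.1.lt_of_ne fun h => haS.2 (h ▸ hP0)
  have hnonneg : ∀ t ∈ Ioc T₁ T₂, 0 ≤ u a t := fun t ht =>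
    ge_of_tendsto (((continuous_apply_of_le hp hq hm hp0 hu hinit ht.1.le).tendsto a).mono_left
      nhdsWithin_le_nhds) <| by
        filter_upwards [Ioo_mem_nhdsLT ha] with b hb
        by_contra! hbt
        exact hb.2.not_ge (csInf_le hbdd ⟨hb.1.le, fun hbP => (hbP t ht).not_ge hbt.le⟩)
  have hne := (hu a).ne_zero_of_nonneg hp hq hm hp0 (x := T₁) ((hinit a).2 ▸ one_ne_zero)
    fun t ht => hnonneg t (Ioo_subset_Ioc_self ht)
  obtain ⟨t, ht, hle⟩ : ∃ t ∈ Ioc T₁ T₂, u a t ≤ 0 := by simpa [P, and_assoc] using haS.2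
  have h0 : u a t = 0 := le_antisymm hle (hnonneg t ht)
  refine ⟨a, ha, ?_, hne⟩
  rcases ht.2.eq_or_lt with rfl | hlt
  · exact h0
  · exact absurd h0 (hne t ⟨ht.1, hlt⟩)

theorem param_eq_of_ne_zero (hp : Continuous p) (hq : Continuous q) (hm : Continuous m)
    (hpos : ∀ t, 0 < p t) (hqnn : ∀ t, 0 ≤ q t) {T₁ T₂ : ℝ} (hT : T₁ < T₂)
    (hu : ∀ a, SturmLiouvilleSol p q m a (u a) (u' a))
    (hinit : ∀ a, u a T₁ = 0 ∧ p T₁ * u' a T₁ = 1) {a b : ℝ} (ha : 0 < a) (hb : 0 < b)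
    (ha₂ : u a T₂ = 0) (hane : ∀ t ∈ Ioo T₁ T₂, u a t ≠ 0) (hb₂ : u b T₂ = 0)
    (hbne : ∀ t ∈ Ioo T₁ T₂, u b t ≠ 0) : a = b := by
  have hp0 : ∀ t, p t ≠ 0 := fun t => (hpos t).ne'
  have hx : ∀ c, p T₁ * u' c T₁ ≠ 0 := fun c => (hinit c).2 ▸ one_ne_zero
  have h'₁ : ∀ c, u' c T₁ ≠ 0 := fun c => right_ne_zero_of_mul_eq_one (hinit c).2
  exact le_antisymm
    ((hu b).param_le_of_ne_zero (hu a) hp hq hm hpos hqnn hT hb (hinit b).1 (h'₁ b) hb₂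
      (hinit a).1 (h'₁ a) ha₂ ((hu a).deriv_ne_zero hp hq hm hp0 (hx a) ha₂) hane)
    ((hu a).param_le_of_ne_zero (hu b) hp hq hm hpos hqnn hT ha (hinit a).1 (h'₁ a) ha₂
      (hinit b).1 (h'₁ b) hb₂ ((hu b).deriv_ne_zero hp hq hm hp0 (hx b) hb₂) hbne)

end Family

/-- If `m⁺ ≢ 0` on `(T₁,T₂)`, there is exactly one `a > 0` such
that `φ_a(T₁) = T₂`; moreover for this `a`, the solution `u a` is a Dirichlet
eigenfunction on `(T₁,T₂)` with no interior zero, i.e. `a = λ₁^m`, the first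
positive eigenvalue of `-(p u')' + q u = λ·m·u`, `u(T₁)=u(T₂)=0`. -/
theorem first_positive_eigenvalue
    (p q m : ℝ → ℝ) (T₁ T₂ : ℝ) (u u' : ℝ → ℝ → ℝ)
    (hp : Continuous p) (hq : Continuous q) (hm : Continuous m)
    (hppos : ∀ t, 0 < p t) (hqnn : ∀ t, 0 ≤ q t)
    (hT : T₁ < T₂)
    (hmplus : ∃ t ∈ Ioo T₁ T₂, 0 < m t)
    (hsol : ∀ a : ℝ, u a T₁ = 0 ∧ u' a T₁ = 1 / p T₁ ∧
      ∀ t, HasDerivAt (u a) (u' a t) t ∧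
        HasDerivAt (fun τ => p τ * u' a τ) (q t * u a t - a * m t * u a t) t) :
    ∃ a : ℝ,
      (0 < a ∧ {t | T₁ < t ∧ u a t = 0}.Nonempty ∧
        sInf {t | T₁ < t ∧ u a t = 0} = T₂) ∧
      (∀ a' : ℝ, 0 < a' → {t | T₁ < t ∧ u a' t = 0}.Nonempty →
        sInf {t | T₁ < t ∧ u a' t = 0} = T₂ → a' = a) ∧
      u a T₂ = 0 ∧ (∀ t ∈ Ioo T₁ T₂, u a t ≠ 0) := by
  have hu : ∀ a, SturmLiouvilleSol p q m a (u a) (u' a) := fun a =>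
    ⟨fun t => ((hsol a).2.2 t).1, fun t => ((hsol a).2.2 t).2⟩
  have hinit : ∀ a, u a T₁ = 0 ∧ p T₁ * u' a T₁ = 1 := fun a =>
    ⟨(hsol a).1, by rw [(hsol a).2.1, mul_one_div_cancel (hppos T₁).ne']⟩
  obtain ⟨a, ha, hT₂, hne⟩ := exists_pos_dirichlet_eigenvalue hp hq hm hppos hqnn hmplus hu hinit
  refine ⟨a, ⟨ha, (sInf_setOf_zero_eq_iff (hu a).continuous hT).2 ⟨hT₂, hne⟩⟩,
    fun a' ha' hZ hinf => ?_, hT₂, hne⟩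
  obtain ⟨hT₂', hne'⟩ := (sInf_setOf_zero_eq_iff (hu a').continuous hT).1 ⟨hZ, hinf⟩
  exact param_eq_of_ne_zero hp hq hm hppos hqnn hT hu hinit ha' ha hT₂' hne' hT₂ hne
end
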